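/- arXiv:2009.07788 — 6 statements merged into one kernel-verified Lean document; each statement's English description precedes it below -/
import Mathlib

section
/- For 0 < α < (1+γ)/2 and 0 ≤ γ < 1, the integral ∫₀^∞ ((1+u)^α − u^α)² u^(−γ) du is finite and bounded above by 1/(1−γ) + α²/(1+γ−2α). -/
/-!
Since `t ↦ t ^ α` is concave for `0 ≤ α ≤ 1`, the difference `(1 + u) ^ α - u ^ α` is at most `1`
(subadditivity) and at most `α u ^ (α - 1)` (tangent line at `u`). The first bound makes the
integrand at most `u ^ (-γ)`, integrable on `(0, 1]` with integral `1 / (1 - γ)`; the second makes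
it at most `α ^ 2 u ^ (2α - 2 - γ)`, integrable on `(1, ∞)` with integral `α ^ 2 / (1 + γ - 2α)`.
-/

open MeasureTheory Set Real

namespace Real

variable {α : ℝ}

theorem rpow_add_le_rpow_add_mul_rpow_sub_one_mul {x y : ℝ} (hx : 0 < x) (hy : -x ≤ y)
    (hα0 : 0 ≤ α) (hα1 : α ≤ 1) : (x + y) ^ α ≤ x ^ α + α * x ^ (α - 1) * y := by
  have hyx : -1 ≤ y / x := by rwa [le_div_iff₀ hx, neg_one_mul]
  calc (x + y) ^ α = x ^ α * (1 + y / x) ^ α := by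
        rw [← mul_rpow hx.le (by linarith), mul_add, mul_one, mul_div_cancel₀ _ hx.ne']
    _ ≤ x ^ α * (1 + α * (y / x)) :=
        mul_le_mul_of_nonneg_left (rpow_one_add_le_one_add_mul_self hyx hα0 hα1) (by positivity)
    _ = x ^ α + α * x ^ (α - 1) * y := by
        rw [rpow_sub_one hx.ne']
        ring

theorem sq_one_add_rpow_sub_rpow_le_one {u : ℝ} (hu : 0 ≤ u) (hα0 : 0 ≤ α) (hα1 : α ≤ 1) :
    ((1 + u) ^ α - u ^ α) ^ 2 ≤ 1 := by
  have hmono : u ^ α ≤ (1 + u) ^ α := rpow_le_rpow hu (by linarith) hα0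
  have hsub : (1 + u) ^ α ≤ 1 + u ^ α := by
    simpa using rpow_add_le_add_rpow zero_le_one hu hα0 hα1
  nlinarith

theorem sq_one_add_rpow_sub_rpow_le {u : ℝ} (hu : 0 < u) (hα0 : 0 ≤ α) (hα1 : α ≤ 1) :
    ((1 + u) ^ α - u ^ α) ^ 2 ≤ α ^ 2 * u ^ (2 * α - 2) := by
  have hmono : u ^ α ≤ (1 + u) ^ α := rpow_le_rpow hu.le (by linarith) hα0
  have htangent : (u + 1) ^ α ≤ u ^ α + α * u ^ (α - 1) * 1 :=
    rpow_add_le_rpow_add_mul_rpow_sub_one_mul hu (by linarith) hα0 hα1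
  have hsq : u ^ (2 * α - 2) = (u ^ (α - 1)) ^ 2 := by
    rw [← rpow_natCast, ← rpow_mul hu.le]
    ring_nf
  rw [add_comm u, mul_one] at htangent
  rw [hsq, ← mul_pow]
  exact pow_le_pow_left₀ (by linarith) (by linarith) 2

theorem sq_one_add_rpow_sub_rpow_mul_rpow_le {u β : ℝ} (hu : 0 < u) (hα0 : 0 ≤ α)
    (hα1 : α ≤ 1) : ((1 + u) ^ α - u ^ α) ^ 2 * u ^ β ≤ α ^ 2 * u ^ (2 * α - 2 + β) := by
  rw [rpow_add hu, ← mul_assoc]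
  exact mul_le_mul_of_nonneg_right (sq_one_add_rpow_sub_rpow_le hu hα0 hα1) (by positivity)

end Real

theorem integrableOn_and_setIntegral_le_of_le {X : Type*} [MeasurableSpace X] {μ : Measure X}
    {s : Set X} {f g : X → ℝ} (hs : MeasurableSet s) (hf : AEStronglyMeasurable f (μ.restrict s))
    (hg : IntegrableOn g s μ) (hf0 : ∀ x ∈ s, 0 ≤ f x) (hfg : ∀ x ∈ s, f x ≤ g x) :
    IntegrableOn f s μ ∧ ∫ x in s, f x ∂μ ≤ ∫ x in s, g x ∂μ := by
  have hint : IntegrableOn f s μ := by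
    refine Integrable.mono' hg hf ?_
    filter_upwards [ae_restrict_mem hs] with x hx
    rw [norm_of_nonneg (hf0 x hx)]
    exact hfg x hx
  exact ⟨hint, setIntegral_mono_on hint hg hs hfg⟩

theorem integrableOn_Ioc_zero_one_rpow {r : ℝ} (hr : -1 < r) :
    IntegrableOn (fun u : ℝ => u ^ r) (Ioc 0 1) := by
  rw [← intervalIntegrable_iff_integrableOn_Ioc_of_le zero_le_one]
  exact intervalIntegral.intervalIntegrable_rpow' hr

theorem integral_Ioc_zero_one_rpow {r : ℝ} (hr : -1 < r) :
    ∫ u in Ioc (0 : ℝ) 1, u ^ r = 1 / (r + 1) := by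
  rw [← intervalIntegral.integral_of_le zero_le_one, integral_rpow (Or.inl hr), one_rpow,
    zero_rpow (by linarith)]
  ring

theorem integral_Ioi_one_rpow {r : ℝ} (hr : r < -1) :
    ∫ u in Ioi (1 : ℝ), u ^ r = 1 / (-r - 1) := by
  rw [integral_Ioi_rpow_of_lt hr one_pos, one_rpow, neg_div, ← div_neg, neg_add']

theorem gfbm_stmt1_general (α γ : ℝ) (hγ1 : γ < 1)
    (hα0 : 0 < α) (hα1 : α < (1 + γ) / 2) :
    IntegrableOn (fun u : ℝ => ((1 + u) ^ α - u ^ α) ^ 2 * u ^ (-γ)) (Set.Ioi 0) ∧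
    ∫ u in Set.Ioi (0 : ℝ), ((1 + u) ^ α - u ^ α) ^ 2 * u ^ (-γ)
      ≤ 1 / (1 - γ) + α ^ 2 / (1 + γ - 2 * α) := by
  set f : ℝ → ℝ := fun u => ((1 + u) ^ α - u ^ α) ^ 2 * u ^ (-γ)
  have hα_le_one : α ≤ 1 := by linarith
  have hf : AEStronglyMeasurable f := by fun_prop
  have hf0 : ∀ u ∈ Ioi (0 : ℝ), 0 ≤ f u := fun u hu =>
    mul_nonneg (sq_nonneg _) (rpow_nonneg (le_of_lt hu) _)
  obtain ⟨hint₁, hle₁⟩ := integrableOn_and_setIntegral_le_of_le measurableSet_Ioc hf.restrict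
    (integrableOn_Ioc_zero_one_rpow (r := -γ) (by linarith)) (fun u hu => hf0 u hu.1)
    fun u hu => mul_le_of_le_one_left (rpow_nonneg hu.1.le _)
      (sq_one_add_rpow_sub_rpow_le_one hu.1.le hα0.le hα_le_one)
  obtain ⟨hint₂, hle₂⟩ := integrableOn_and_setIntegral_le_of_le measurableSet_Ioi hf.restrict
    ((integrableOn_Ioi_rpow_of_lt (a := 2 * α - 2 + -γ) (by linarith) one_pos).const_mul (α ^ 2))
    (fun u hu => hf0 u (lt_trans one_pos (mem_Ioi.mp hu)))
    fun u (hu : 1 < u) => sq_one_add_rpow_sub_rpow_mul_rpow_le (by linarith) hα0.le hα_le_one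
  rw [← Ioc_union_Ioi_eq_Ioi zero_le_one]
  refine ⟨hint₁.union hint₂, ?_⟩
  rw [setIntegral_union (Ioc_disjoint_Ioi le_rfl) measurableSet_Ioi hint₁ hint₂]
  rw [integral_Ioc_zero_one_rpow (by linarith)] at hle₁
  rw [integral_const_mul, integral_Ioi_one_rpow (by linarith)] at hle₂
  calc _ ≤ 1 / (-γ + 1) + α ^ 2 * (1 / (-(2 * α - 2 + -γ) - 1)) := add_le_add hle₁ hle₂
    _ = 1 / (1 - γ) + α ^ 2 / (1 + γ - 2 * α) := by ring_nf

theorem gfbm_stmt1 (α γ : ℝ) (hγ0 : 0 ≤ γ) (hγ1 : γ < 1)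
    (hα0 : 0 < α) (hα1 : α < (1 + γ) / 2) :
    IntegrableOn (fun u : ℝ => ((1 + u) ^ α - u ^ α) ^ 2 * u ^ (-γ)) (Set.Ioi 0) ∧
    ∫ u in Set.Ioi (0 : ℝ), ((1 + u) ^ α - u ^ α) ^ 2 * u ^ (-γ)
      ≤ 1 / (1 - γ) + α ^ 2 / (1 + γ - 2 * α) :=
  gfbm_stmt1_general α γ hγ1 hα0 hα1
end

section
/- For −(1−γ)/2 < α < 0 and 0 ≤ γ < 1, setting α̃ = −α and γ̃ = γ − 2α (so 0 < α̃ < 1/2 and 0 < γ̃ < 1), one has ∫₀^∞ ((1+u)^α − u^α)² u^(−γ) du ≤ ∫₀^∞ ((1+u)^{α̃} − u^{α̃})² u^(−γ̃) du ≤ 1/(1−γ̃) + α̃²/(1+γ̃−2α̃) < ∞. -/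
/-!
Split `(0, ∞)` at `1`. Near `0` the squared increment `((1+u)^β - u^β)^2` is at most `1` by
subadditivity of `u ↦ u^β`, and the weight `u^(-δ)` integrates to `1/(1-δ)`; near `∞` Bernoulli's
inequality bounds the increment by `β u^(β-1)`, whose square against the weight integrates to
`β²/(1+δ-2β)`. For `α < 0` the identity
`((1+u)^α - u^α)^2 u^(-γ) = (1+u)^(2α) · ((1+u)^(-α) - u^(-α))^2 u^(-(γ-2α))` and `(1+u)^(2α) ≤ 1`
compare the integrand for `(α, γ)` pointwise with the one for `(-α, γ - 2α)`.
-/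

open MeasureTheory Set Real

noncomputable def gfbmIntegrand (β δ u : ℝ) : ℝ := ((1 + u) ^ β - u ^ β) ^ 2 * u ^ (-δ)

@[fun_prop]
lemma measurable_gfbmIntegrand (β δ : ℝ) : Measurable (gfbmIntegrand β δ) := by
  unfold gfbmIntegrand
  fun_prop

lemma gfbmIntegrand_nonneg (β δ : ℝ) {u : ℝ} (hu : 0 ≤ u) : 0 ≤ gfbmIntegrand β δ u := by
  unfold gfbmIntegrand
  positivity

lemma rpow_le_one_add_rpow {u β : ℝ} (hu : 0 ≤ u) (hβ : 0 ≤ β) : u ^ β ≤ (1 + u) ^ β :=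
  rpow_le_rpow hu (by linarith) hβ

lemma one_add_rpow_sub_rpow_le_one {u β : ℝ} (hu : 0 ≤ u) (hβ0 : 0 ≤ β) (hβ1 : β ≤ 1) :
    (1 + u) ^ β - u ^ β ≤ 1 := by
  have := rpow_add_le_add_rpow zero_le_one hu hβ0 hβ1
  rw [one_rpow] at this
  linarith

lemma one_add_rpow_sub_rpow_le_mul_rpow {u β : ℝ} (hu : 0 < u) (hβ0 : 0 ≤ β) (hβ1 : β ≤ 1) :
    (1 + u) ^ β - u ^ β ≤ β * u ^ (β - 1) := by
  have bernoulli : (1 + u⁻¹) ^ β ≤ 1 + β * u⁻¹ :=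
    rpow_one_add_le_one_add_mul_self (by linarith [inv_pos.mpr hu]) hβ0 hβ1
  have hu' : u ^ β * u⁻¹ = u ^ (β - 1) := by
    rw [← rpow_neg_one, ← rpow_add hu, sub_eq_add_neg]
  calc (1 + u) ^ β - u ^ β = u ^ β * (1 + u⁻¹) ^ β - u ^ β := by
        rw [← mul_rpow hu.le (by positivity), mul_add, mul_inv_cancel₀ hu.ne', mul_one, add_comm]
    _ ≤ u ^ β * (1 + β * u⁻¹) - u ^ β := by gcongr
    _ = β * u ^ (β - 1) := by rw [← hu']; ring

lemma gfbmIntegrand_le_rpow {β δ u : ℝ} (hu : 0 < u) (hβ0 : 0 ≤ β) (hβ1 : β ≤ 1) :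
    gfbmIntegrand β δ u ≤ u ^ (-δ) := by
  have h0 := rpow_le_one_add_rpow hu.le hβ0
  have h1 := one_add_rpow_sub_rpow_le_one hu.le hβ0 hβ1
  have hsq : ((1 + u) ^ β - u ^ β) ^ 2 ≤ 1 := by nlinarith
  unfold gfbmIntegrand
  simpa using mul_le_mul_of_nonneg_right hsq (rpow_nonneg hu.le (-δ))

lemma gfbmIntegrand_le_mul_rpow {β δ u : ℝ} (hu : 0 < u) (hβ0 : 0 ≤ β) (hβ1 : β ≤ 1) :
    gfbmIntegrand β δ u ≤ β ^ 2 * u ^ (2 * β - 2 - δ) := by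
  have h0 : 0 ≤ (1 + u) ^ β - u ^ β := sub_nonneg.mpr (rpow_le_one_add_rpow hu.le hβ0)
  have hsq := pow_le_pow_left₀ h0 (one_add_rpow_sub_rpow_le_mul_rpow hu hβ0 hβ1) 2
  have hpow : (u ^ (β - 1)) ^ 2 * u ^ (-δ) = u ^ (2 * β - 2 - δ) := by
    rw [← rpow_mul_natCast hu.le, ← rpow_add hu]
    ring_nf
  calc gfbmIntegrand β δ u ≤ (β * u ^ (β - 1)) ^ 2 * u ^ (-δ) := by
        unfold gfbmIntegrand; gcongr
    _ = β ^ 2 * u ^ (2 * β - 2 - δ) := by rw [mul_pow, mul_assoc, hpow]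

lemma gfbmIntegrand_eq_mul {β γ u : ℝ} (hu : 0 < u) :
    gfbmIntegrand β γ u = ((1 + u) ^ β) ^ 2 * gfbmIntegrand (-β) (γ - 2 * β) u := by
  have h1u : 0 < 1 + u := by linarith
  have hweight : u ^ (-(γ - 2 * β)) = u ^ (-γ) * (u ^ β) ^ 2 := by
    rw [← rpow_mul_natCast hu.le, ← rpow_add hu]
    ring_nf
  have hP : 0 < (1 + u) ^ β := rpow_pos_of_pos h1u _
  have hQ : 0 < u ^ β := rpow_pos_of_pos hu _
  unfold gfbmIntegrand
  rw [hweight, rpow_neg h1u.le β, rpow_neg hu.le β]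
  field_simp
  ring

lemma gfbmIntegrand_le_gfbmIntegrand_neg {β γ u : ℝ} (hu : 0 < u) (hβ : β ≤ 0) :
    gfbmIntegrand β γ u ≤ gfbmIntegrand (-β) (γ - 2 * β) u := by
  rw [gfbmIntegrand_eq_mul hu]
  refine mul_le_of_le_one_left (gfbmIntegrand_nonneg _ _ hu.le) (pow_le_one₀ (by positivity) ?_)
  exact rpow_le_one_of_one_le_of_nonpos (by linarith) hβ

lemma MeasureTheory.IntegrableOn.of_nonneg_of_le {X : Type*} [MeasurableSpace X] {μ : Measure X}
    {f g : X → ℝ} {s : Set X} (hg : IntegrableOn g s μ) (hs : MeasurableSet s) (hf : Measurable f)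
    (hf0 : ∀ x ∈ s, 0 ≤ f x) (hfg : ∀ x ∈ s, f x ≤ g x) : IntegrableOn f s μ := by
  refine hg.mono' hf.aestronglyMeasurable.restrict ?_
  filter_upwards [ae_restrict_mem hs] with x hx
  rw [norm_of_nonneg (hf0 x hx)]
  exact hfg x hx

lemma integrableOn_Ioi_and_setIntegral_le_of_le {f g h : ℝ → ℝ} {a b : ℝ} (hab : b ≤ a)
    (hf : Measurable f) (hf0 : ∀ u ∈ Ioi b, 0 ≤ f u)
    (hg : IntegrableOn g (Ioc b a)) (hfg : ∀ u ∈ Ioc b a, f u ≤ g u)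
    (hh : IntegrableOn h (Ioi a)) (hfh : ∀ u ∈ Ioi a, f u ≤ h u) :
    IntegrableOn f (Ioi b) ∧ ∫ u in Ioi b, f u ≤ (∫ u in Ioc b a, g u) + ∫ u in Ioi a, h u := by
  have hfg' : IntegrableOn f (Ioc b a) :=
    hg.of_nonneg_of_le measurableSet_Ioc hf (fun u hu => hf0 u hu.1) hfg
  have hfh' : IntegrableOn f (Ioi a) :=
    hh.of_nonneg_of_le measurableSet_Ioi hf (fun u hu => hf0 u (hab.trans_lt hu)) hfh
  rw [← Ioc_union_Ioi_eq_Ioi hab,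
    setIntegral_union (Ioc_disjoint_Ioi le_rfl) measurableSet_Ioi hfg' hfh']
  exact ⟨hfg'.union hfh', add_le_add (setIntegral_mono_on hfg' hg measurableSet_Ioc hfg)
    (setIntegral_mono_on hfh' hh measurableSet_Ioi hfh)⟩

lemma setIntegral_Ioc_zero_one_rpow_neg {δ : ℝ} (hδ : δ < 1) :
    ∫ u in Ioc (0 : ℝ) 1, u ^ (-δ) = 1 / (1 - δ) := by
  rw [← intervalIntegral.integral_of_le zero_le_one, integral_rpow (Or.inl (by linarith)),
    one_rpow, zero_rpow (by linarith)]
  ring_nf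

lemma integrableOn_gfbmIntegrand_and_integral_le {β δ : ℝ} (hβ : 0 ≤ β) (hβδ : 2 * β < 1 + δ)
    (hδ : δ < 1) :
    IntegrableOn (gfbmIntegrand β δ) (Ioi 0) ∧
      ∫ u in Ioi (0 : ℝ), gfbmIntegrand β δ u ≤ 1 / (1 - δ) + β ^ 2 / (1 + δ - 2 * β) := by
  have hβ1 : β ≤ 1 := by linarith
  have hexp : 2 * β - 2 - δ < -1 := by linarith
  have hsplit := integrableOn_Ioi_and_setIntegral_le_of_le zero_le_one
    (measurable_gfbmIntegrand β δ) (fun u hu => gfbmIntegrand_nonneg β δ (le_of_lt hu))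
    (intervalIntegral.intervalIntegrable_rpow' (by linarith)).1
    (fun u hu => gfbmIntegrand_le_rpow hu.1 hβ hβ1)
    ((integrableOn_Ioi_rpow_of_lt hexp one_pos).const_mul (β ^ 2))
    (fun u hu => gfbmIntegrand_le_mul_rpow (zero_lt_one.trans hu) hβ hβ1)
  have htail : ∫ u in Ioi (1 : ℝ), β ^ 2 * u ^ (2 * β - 2 - δ) = β ^ 2 / (1 + δ - 2 * β) := by
    rw [integral_const_mul, integral_Ioi_rpow_of_lt hexp one_pos, one_rpow,
      show 2 * β - 2 - δ + 1 = -(1 + δ - 2 * β) by ring, neg_div_neg_eq, mul_one_div]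
  rwa [setIntegral_Ioc_zero_one_rpow_neg hδ, htail] at hsplit

theorem gfbm_stmt2_general (α γ α' γ' : ℝ) (hγ0 : 0 ≤ γ)
    (hα0 : -(1 - γ) / 2 < α) (hα1 : α < 0)
    (hα' : α' = -α) (hγ' : γ' = γ - 2 * α) :
    IntegrableOn (fun u : ℝ => ((1 + u) ^ α - u ^ α) ^ 2 * u ^ (-γ)) (Set.Ioi 0) ∧
    IntegrableOn (fun u : ℝ => ((1 + u) ^ α' - u ^ α') ^ 2 * u ^ (-γ')) (Set.Ioi 0) ∧
    (∫ u in Set.Ioi (0 : ℝ), ((1 + u) ^ α - u ^ α) ^ 2 * u ^ (-γ))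
      ≤ (∫ u in Set.Ioi (0 : ℝ), ((1 + u) ^ α' - u ^ α') ^ 2 * u ^ (-γ')) ∧
    (∫ u in Set.Ioi (0 : ℝ), ((1 + u) ^ α' - u ^ α') ^ 2 * u ^ (-γ'))
      ≤ 1 / (1 - γ') + α' ^ 2 / (1 + γ' - 2 * α') := by
  subst hα' hγ'
  obtain ⟨hint', hbound⟩ :=
    integrableOn_gfbmIntegrand_and_integral_le (β := -α) (δ := γ - 2 * α)
      (by linarith) (by linarith) (by linarith)
  have hcomp : ∀ u ∈ Ioi (0 : ℝ), gfbmIntegrand α γ u ≤ gfbmIntegrand (-α) (γ - 2 * α) u :=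
    fun u hu => gfbmIntegrand_le_gfbmIntegrand_neg hu hα1.le
  have hint : IntegrableOn (gfbmIntegrand α γ) (Ioi 0) :=
    hint'.of_nonneg_of_le measurableSet_Ioi (measurable_gfbmIntegrand α γ)
      (fun u hu => gfbmIntegrand_nonneg α γ (le_of_lt hu)) hcomp
  exact ⟨hint, hint', setIntegral_mono_on hint hint' measurableSet_Ioi hcomp, hbound⟩

theorem gfbm_stmt2 (α γ α' γ' : ℝ) (hγ0 : 0 ≤ γ) (hγ1 : γ < 1)
    (hα0 : -(1 - γ) / 2 < α) (hα1 : α < 0)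
    (hα' : α' = -α) (hγ' : γ' = γ - 2 * α) :
    IntegrableOn (fun u : ℝ => ((1 + u) ^ α - u ^ α) ^ 2 * u ^ (-γ)) (Set.Ioi 0) ∧
    IntegrableOn (fun u : ℝ => ((1 + u) ^ α' - u ^ α') ^ 2 * u ^ (-γ')) (Set.Ioi 0) ∧
    (∫ u in Set.Ioi (0 : ℝ), ((1 + u) ^ α - u ^ α) ^ 2 * u ^ (-γ))
      ≤ (∫ u in Set.Ioi (0 : ℝ), ((1 + u) ^ α' - u ^ α') ^ 2 * u ^ (-γ')) ∧
    (∫ u in Set.Ioi (0 : ℝ), ((1 + u) ^ α' - u ^ α') ^ 2 * u ^ (-γ'))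
      ≤ 1 / (1 - γ') + α' ^ 2 / (1 + γ' - 2 * α') :=
  gfbm_stmt2_general α γ α' γ' hγ0 hα0 hα1 hα' hγ'
end

section
/- For 0 < α < (1+γ)/2 and 0 < γ < 1, for every x > 0 the integral ∫₀¹ (1−w)^(−γ) ((1+xw)^α − (xw)^α)² x^(1−γ) dw is bounded above by 4·Beta(1−γ, γ), uniformly in x. -/
/-!
Substituting `y = x w`, the integrand is `(1 - w)^(-γ) w^(γ-1)` times
`((1 + y)^α - y^α)^2 y^(1-γ)`, and the latter is bounded by `1` uniformly in `y > 0`: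
for `y ≤ 1` by subadditivity of `t ↦ t^α`, and for `y ≥ 1` by the Bernoulli bound
`(1 + y)^α - y^α ≤ α y^(α-1)`, which gives `y^(2α-1-γ) ≤ 1` because `2α ≤ 1 + γ`.
What remains is a Beta integral, symmetric under `w ↦ 1 - w`.
-/

open MeasureTheory Set Real Filter

section PowerDifference

variable {α y : ℝ}

lemma one_add_rpow_sub_rpow_nonneg (hα : 0 ≤ α) (hy : 0 ≤ y) : 0 ≤ (1 + y) ^ α - y ^ α :=
  sub_nonneg.2 (rpow_le_rpow hy (by linarith) hα)

lemma one_add_rpow_sub_rpow_le_one_s4 (hα : 0 ≤ α) (hα1 : α ≤ 1) (hy : 0 ≤ y) :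
    (1 + y) ^ α - y ^ α ≤ 1 := by
  have := rpow_add_le_add_rpow zero_le_one hy hα hα1
  rw [one_rpow] at this
  linarith

lemma one_add_rpow_sub_rpow_le_mul_rpow_sub_one (hα : 0 ≤ α) (hα1 : α ≤ 1) (hy : 0 < y) :
    (1 + y) ^ α - y ^ α ≤ α * y ^ (α - 1) := by
  have hbernoulli : (1 + y⁻¹) ^ α ≤ 1 + α * y⁻¹ :=
    rpow_one_add_le_one_add_mul_self (by linarith [inv_pos.2 hy]) hα hα1
  have hfactor : (1 + y) ^ α = y ^ α * (1 + y⁻¹) ^ α := by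
    rw [← mul_rpow hy.le (by positivity), mul_add, mul_inv_cancel₀ hy.ne', mul_one, add_comm]
  have hshift : y ^ α * y⁻¹ = y ^ (α - 1) := by
    rw [rpow_sub_one hy.ne', div_eq_mul_inv]
  calc (1 + y) ^ α - y ^ α = y ^ α * (1 + y⁻¹) ^ α - y ^ α := by rw [hfactor]
    _ ≤ y ^ α * (1 + α * y⁻¹) - y ^ α := by gcongr
    _ = α * y ^ (α - 1) := by rw [← hshift]; ring

lemma sq_one_add_rpow_sub_rpow_mul_rpow_le_one {γ : ℝ} (hα : 0 ≤ α) (hαγ : 2 * α ≤ 1 + γ)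
    (hγ : γ ≤ 1) (hy : 0 < y) : ((1 + y) ^ α - y ^ α) ^ 2 * y ^ (1 - γ) ≤ 1 := by
  have hα1 : α ≤ 1 := by linarith
  have hdiff := one_add_rpow_sub_rpow_nonneg hα hy.le
  rcases le_total y 1 with hy1 | hy1
  · exact mul_le_one₀ (pow_le_one₀ hdiff (one_add_rpow_sub_rpow_le_one_s4 hα hα1 hy.le))
      (rpow_nonneg hy.le _) (rpow_le_one hy.le hy1 (by linarith))
  · have hbound : (1 + y) ^ α - y ^ α ≤ y ^ (α - 1) :=
      (one_add_rpow_sub_rpow_le_mul_rpow_sub_one hα hα1 hy).trans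
        (mul_le_of_le_one_left (rpow_nonneg hy.le _) hα1)
    calc ((1 + y) ^ α - y ^ α) ^ 2 * y ^ (1 - γ) ≤ (y ^ (α - 1)) ^ 2 * y ^ (1 - γ) := by
          gcongr
      _ = y ^ (2 * α - 1 - γ) := by
          rw [← rpow_two, ← rpow_mul hy.le, ← rpow_add hy]; ring_nf
      _ ≤ 1 := rpow_le_one_of_one_le_of_nonpos hy1 (by linarith)

end PowerDifference

section Beta

lemma integrableOn_rpow_mul_one_sub_rpow {a b : ℝ} (ha : 0 < a) (hb : 0 < b) :
    IntegrableOn (fun w : ℝ => w ^ (a - 1) * (1 - w) ^ (b - 1)) (Ioo 0 1) := by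
  have hconv := Complex.betaIntegral_convergent (u := a) (v := b) (by simpa) (by simpa)
  rw [intervalIntegrable_iff_integrableOn_Ioc_of_le zero_le_one] at hconv
  refine (IntegrableOn.mono_set hconv.re Ioo_subset_Ioc_self).congr_fun (fun w hw => ?_)
    measurableSet_Ioo
  have hw1 : 0 ≤ 1 - w := by linarith [hw.2]
  dsimp only
  rw [RCLike.re_to_complex, show (1 : ℂ) - w = ((1 - w : ℝ) : ℂ) by push_cast; ring]
  norm_cast
  rw [← Complex.ofReal_cpow hw.1.le, ← Complex.ofReal_cpow hw1, ← Complex.ofReal_mul,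
    Complex.ofReal_re]

lemma integral_Ioo_rpow_mul_one_sub_rpow_comm (a b : ℝ) :
    ∫ w in Ioo (0 : ℝ) 1, w ^ a * (1 - w) ^ b = ∫ w in Ioo (0 : ℝ) 1, w ^ b * (1 - w) ^ a := by
  simp only [← integral_Ioc_eq_integral_Ioo, ← intervalIntegral.integral_of_le zero_le_one]
  have hreflect := intervalIntegral.integral_comp_sub_left (a := 0) (b := 1)
    (fun w : ℝ => w ^ b * (1 - w) ^ a) 1
  simp only [sub_sub_cancel, sub_zero, sub_self] at hreflect
  rw [← hreflect]
  simp only [mul_comm]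

end Beta

theorem gfbm_stmt4 (α γ : ℝ) (hγ0 : 0 < γ) (hγ1 : γ < 1)
    (hα0 : 0 < α) (hα1 : α < (1 + γ) / 2) :
    ∀ x : ℝ, 0 < x →
      (∫ w in Set.Ioo (0 : ℝ) 1,
          (1 - w) ^ (-γ) * ((1 + x * w) ^ α - (x * w) ^ α) ^ 2 * x ^ (1 - γ))
        ≤ 4 * ∫ τ in Set.Ioo (0 : ℝ) 1, τ ^ (-γ) * (1 - τ) ^ (γ - 1) := by
  intro x hx
  have hbeta : IntegrableOn (fun w : ℝ => 4 * (w ^ (γ - 1) * (1 - w) ^ (-γ))) (Ioo 0 1) := by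
    have := integrableOn_rpow_mul_one_sub_rpow hγ0 (sub_pos.2 hγ1)
    simp only [sub_sub_cancel_left] at this
    exact this.const_mul 4
  rw [integral_Ioo_rpow_mul_one_sub_rpow_comm, ← integral_const_mul]
  refine setIntegral_mono_of_nonneg (fun w hw => ?_) (fun w hw => ?_) hbeta
  · have : 0 ≤ 1 - w := by linarith [hw.2]
    positivity
  · have hw0 := hw.1
    have hweight : 0 ≤ (1 - w) ^ (-γ) * w ^ (γ - 1) := by
      have : 0 ≤ 1 - w := by linarith [hw.2]
      positivity
    have hsubst : x ^ (1 - γ) = w ^ (γ - 1) * (x * w) ^ (1 - γ) := by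
      rw [mul_rpow hx.le hw0.le, mul_left_comm, ← rpow_add hw0]
      norm_num
    have hkey := sq_one_add_rpow_sub_rpow_mul_rpow_le_one hα0.le (by linarith) hγ1.le
      (mul_pos hx hw0)
    calc (1 - w) ^ (-γ) * ((1 + x * w) ^ α - (x * w) ^ α) ^ 2 * x ^ (1 - γ)
        = ((1 - w) ^ (-γ) * w ^ (γ - 1)) *
            (((1 + x * w) ^ α - (x * w) ^ α) ^ 2 * (x * w) ^ (1 - γ)) := by
          rw [hsubst]; ring
      _ ≤ ((1 - w) ^ (-γ) * w ^ (γ - 1)) * 4 :=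
          mul_le_mul_of_nonneg_left (hkey.trans (by norm_num)) hweight
      _ = 4 * (w ^ (γ - 1) * (1 - w) ^ (-γ)) := by ring
end

section
/- Let Φ(s,t) = ∫ₛᵗ (t−u)^{2α} u^(−γ) du + ∫₀ˢ ((t−u)^α − (s−u)^α)² u^(−γ) du + ∫₀^∞ ((t+u)^α − (s+u)^α)² u^(−γ) du for 0 < s < t. Then for every T > 0 there is a constant C_T > 0 such that Φ(s,t) ≤ C_T (t−s)^{2H} for all 0 < s < t ≤ T, where H = α − γ/2 + 1/2. -/
open MeasureTheory Set Real Filter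

/-!
Write `h = t - s` and `D(x) = (x + h) ^ α - x ^ α`. For `α ≤ 1` and `0 < b ≤ x`, `D(x) ^ 2` is
at most `h ^ (2α) + b ^ (2α)` (subadditivity of `x ^ α`, or its monotonicity when `α < 0`) and
at most `α² h² b ^ (2α - 2)` (mean value theorem). The minimum of the two, weighted by
`b ^ (-γ)`, is integrable on `(0, ∞)` with integral `O(h ^ (2H))`: the first bound is used below
`h`, the second above. The third integral is dominated by this majorant with `b = u`, the second
by twice it with `b = min u (s - u)`, since `u ^ (-γ) ≤ (s - u) ^ (-γ)` when `s - u ≤ u`. The first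
integral is split at the midpoint of `(s, t)`, using `u ^ (-γ) ≤ (u - s) ^ (-γ)` on the left half
and `u ^ (-γ) ≤ (t - u) ^ (-γ)` on the right half.
-/

namespace Real

lemma rpow_le_rpow_add_rpow_of_mem_Icc {a b y p : ℝ} (ha : 0 < a) (hy : y ∈ Icc a b) :
    y ^ p ≤ a ^ p + b ^ p := by
  have hy0 : 0 < y := ha.trans_le hy.1
  rcases le_total 0 p with hp | hp
  · linarith [rpow_le_rpow hy0.le hy.2 hp, rpow_nonneg ha.le p]
  · linarith [rpow_le_rpow_of_nonpos ha hy.1 hp, rpow_nonneg (hy0.le.trans hy.2) p]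

lemma rpow_sq {x : ℝ} (hx : 0 ≤ x) (p : ℝ) : (x ^ p) ^ 2 = x ^ (2 * p) := by
  rw [← rpow_mul_natCast hx, mul_comm]
  norm_num

lemma integral_rpow_from_zero {b r : ℝ} (hr : -1 < r) :
    ∫ x in (0 : ℝ)..b, x ^ r = b ^ (r + 1) / (r + 1) := by
  rw [integral_rpow (Or.inl hr), zero_rpow (by linarith), sub_zero]

lemma abs_rpow_add_sub_rpow_le {x h α : ℝ} (hx : 0 < x) (hh : 0 ≤ h) (hα : α ≤ 1) :
    |(x + h) ^ α - x ^ α| ≤ |α| * x ^ (α - 1) * h := by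
  have hderiv : ∀ y ∈ Icc x (x + h),
      HasDerivWithinAt (fun y : ℝ => y ^ α) (α * y ^ (α - 1)) (Icc x (x + h)) y :=
    fun y hy => (hasDerivAt_rpow_const (Or.inl (hx.trans_le hy.1).ne')).hasDerivWithinAt
  have hbound : ∀ y ∈ Icc x (x + h), ‖α * y ^ (α - 1)‖ ≤ |α| * x ^ (α - 1) := by
    intro y hy
    rw [norm_mul, norm_eq_abs, norm_of_nonneg (rpow_nonneg (hx.le.trans hy.1) _)]
    exact mul_le_mul_of_nonneg_left (rpow_le_rpow_of_nonpos hx hy.1 (by linarith)) (abs_nonneg α)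
  simpa [abs_of_nonneg hh] using (convex_Icc x (x + h)).norm_image_sub_le_of_norm_hasDerivWithin_le
    hderiv hbound (left_mem_Icc.2 (by linarith)) (right_mem_Icc.2 (by linarith))

end Real

section Increment

variable {x b h α : ℝ}

lemma sq_rpow_add_sub_rpow_le_add (hb : 0 < b) (hbx : b ≤ x) (hh : 0 ≤ h) (hα : α ≤ 1) :
    ((x + h) ^ α - x ^ α) ^ 2 ≤ h ^ (2 * α) + b ^ (2 * α) := by
  have hx : 0 < x := hb.trans_le hbx
  rcases le_total 0 α with hα0 | hα0
  · have hmono := rpow_le_rpow hx.le (le_add_of_nonneg_right hh) hα0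
    have hsub := rpow_add_le_add_rpow hx.le hh hα0 hα
    have hsq : ((x + h) ^ α - x ^ α) ^ 2 ≤ (h ^ α) ^ 2 :=
      sq_le_sq' (by linarith [rpow_nonneg hh α]) (by linarith)
    linarith [rpow_sq hh α, rpow_nonneg hb.le (2 * α)]
  · have hanti := rpow_le_rpow_of_nonpos hx (le_add_of_nonneg_right hh) hα0
    have hxb := rpow_le_rpow_of_nonpos hb hbx hα0
    have hsq : ((x + h) ^ α - x ^ α) ^ 2 ≤ (b ^ α) ^ 2 :=
      sq_le_sq' (by linarith [rpow_nonneg (hx.le.trans (le_add_of_nonneg_right hh)) α])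
        (by linarith [rpow_nonneg hx.le α])
    linarith [rpow_sq hb.le α, rpow_nonneg hh (2 * α)]

lemma sq_rpow_add_sub_rpow_le_mul (hb : 0 < b) (hbx : b ≤ x) (hh : 0 ≤ h) (hα : α ≤ 1) :
    ((x + h) ^ α - x ^ α) ^ 2 ≤ α ^ 2 * h ^ 2 * b ^ (2 * α - 2) := by
  have hx : 0 < x := hb.trans_le hbx
  have habs : |(x + h) ^ α - x ^ α| ≤ |α| * b ^ (α - 1) * h :=
    (abs_rpow_add_sub_rpow_le hx hh hα).trans <| mul_le_mul_of_nonneg_right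
      (mul_le_mul_of_nonneg_left (rpow_le_rpow_of_nonpos hb hbx (by linarith)) (abs_nonneg α)) hh
  calc ((x + h) ^ α - x ^ α) ^ 2 ≤ (|α| * b ^ (α - 1) * h) ^ 2 := (abs_le.1 habs).elim sq_le_sq'
    _ = α ^ 2 * h ^ 2 * b ^ (2 * α - 2) := by
      rw [mul_pow, mul_pow, sq_abs, rpow_sq hb.le, show 2 * (α - 1) = 2 * α - 2 by ring]
      ring

end Increment

noncomputable def incrMajorant (α γ h u : ℝ) : ℝ :=
  min (h ^ (2 * α) + u ^ (2 * α)) (α ^ 2 * h ^ 2 * u ^ (2 * α - 2)) * u ^ (-γ)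

section Majorant

variable {α γ h : ℝ}

lemma incrMajorant_nonneg (hh : 0 ≤ h) {u : ℝ} (hu : 0 ≤ u) : 0 ≤ incrMajorant α γ h u := by
  unfold incrMajorant
  exact mul_nonneg (le_min (by positivity) (by positivity)) (rpow_nonneg hu _)

lemma measurable_incrMajorant : Measurable (incrMajorant α γ h) := by
  unfold incrMajorant
  fun_prop

lemma incrMajorant_le_left {u : ℝ} (hu : 0 < u) :
    incrMajorant α γ h u ≤ h ^ (2 * α) * u ^ (-γ) + u ^ (2 * α - γ) := by
  rw [sub_eq_add_neg, rpow_add hu, ← add_mul]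
  exact mul_le_mul_of_nonneg_right (min_le_left _ _) (rpow_nonneg hu.le _)

lemma incrMajorant_le_right {u : ℝ} (hu : 0 < u) :
    incrMajorant α γ h u ≤ α ^ 2 * h ^ 2 * u ^ (2 * α - 2 - γ) := by
  rw [sub_eq_add_neg (2 * α - 2), rpow_add hu, ← mul_assoc]
  exact mul_le_mul_of_nonneg_right (min_le_right _ _) (rpow_nonneg hu.le _)

lemma sq_rpow_add_sub_rpow_mul_rpow_le_incrMajorant {x b u : ℝ} (hb : 0 < b) (hbx : b ≤ x)
    (hbu : b ≤ u) (hh : 0 ≤ h) (hα : α ≤ 1) (hγ₀ : 0 ≤ γ) :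
    ((x + h) ^ α - x ^ α) ^ 2 * u ^ (-γ) ≤ incrMajorant α γ h b :=
  mul_le_mul
    (le_min (sq_rpow_add_sub_rpow_le_add hb hbx hh hα) (sq_rpow_add_sub_rpow_le_mul hb hbx hh hα))
    (rpow_le_rpow_of_nonpos hb hbu (neg_nonpos.2 hγ₀)) (rpow_nonneg (hb.le.trans hbu) _)
    (le_min (by positivity) (by positivity))

lemma integrableOn_incrMajorant_bound_left (hh : 0 < h) (hγ₁ : γ < 1) (hα₀ : 0 < 2 * α + 1 - γ) :
    IntegrableOn (fun u => h ^ (2 * α) * u ^ (-γ) + u ^ (2 * α - γ)) (Ioc 0 h) :=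
  (intervalIntegrable_iff_integrableOn_Ioc_of_le hh.le).1 <|
    ((intervalIntegral.intervalIntegrable_rpow' (by linarith)).const_mul _).add
      (intervalIntegral.intervalIntegrable_rpow' (by linarith))

lemma integrableOn_incrMajorant_bound_right (hh : 0 < h) (hα₁ : 2 * α < 1 + γ) :
    IntegrableOn (fun u => α ^ 2 * h ^ 2 * u ^ (2 * α - 2 - γ)) (Ioi h) :=
  (integrableOn_Ioi_rpow_of_lt (by linarith) hh).const_mul _

theorem integrableOn_incrMajorant (hh : 0 < h) (hγ₁ : γ < 1) (hα₀ : 0 < 2 * α + 1 - γ)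
    (hα₁ : 2 * α < 1 + γ) : IntegrableOn (incrMajorant α γ h) (Ioi 0) := by
  rw [← Ioc_union_Ioi_eq_Ioi hh.le]
  refine IntegrableOn.union ((integrableOn_incrMajorant_bound_left hh hγ₁ hα₀).mono'
    measurable_incrMajorant.aestronglyMeasurable ?_)
    ((integrableOn_incrMajorant_bound_right hh hα₁).mono'
      measurable_incrMajorant.aestronglyMeasurable ?_)
  · refine ae_restrict_of_forall_mem measurableSet_Ioc fun u hu => ?_
    rw [norm_of_nonneg (incrMajorant_nonneg hh.le hu.1.le)]
    exact incrMajorant_le_left hu.1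
  · refine ae_restrict_of_forall_mem measurableSet_Ioi fun u hu => ?_
    rw [norm_of_nonneg (incrMajorant_nonneg hh.le (hh.le.trans hu.le))]
    exact incrMajorant_le_right (hh.trans hu)

theorem integral_incrMajorant_le (hh : 0 < h) (hγ₁ : γ < 1) (hα₀ : 0 < 2 * α + 1 - γ)
    (hα₁ : 2 * α < 1 + γ) :
    ∫ u in Ioi 0, incrMajorant α γ h u ≤
      (1 / (1 - γ) + 1 / (2 * α + 1 - γ) + α ^ 2 / (1 + γ - 2 * α)) * h ^ (2 * α + 1 - γ) := by
  have hI := integrableOn_incrMajorant hh hγ₁ hα₀ hα₁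
  have hleft : ∫ u in Ioc 0 h, incrMajorant α γ h u
      ≤ h ^ (2 * α + 1 - γ) / (1 - γ) + h ^ (2 * α + 1 - γ) / (2 * α + 1 - γ) := by
    refine (setIntegral_mono_on (hI.mono_set Ioc_subset_Ioi_self)
      (integrableOn_incrMajorant_bound_left hh hγ₁ hα₀) measurableSet_Ioc
      fun u hu => incrMajorant_le_left hu.1).trans_eq ?_
    rw [← intervalIntegral.integral_of_le hh.le, intervalIntegral.integral_add
      ((intervalIntegral.intervalIntegrable_rpow' (by linarith)).const_mul _)
      (intervalIntegral.intervalIntegrable_rpow' (by linarith)),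
      intervalIntegral.integral_const_mul, integral_rpow_from_zero (by linarith),
      integral_rpow_from_zero (by linarith), ← mul_div_assoc, ← rpow_add hh]
    ring_nf
  have hright : ∫ u in Ioi h, incrMajorant α γ h u
      ≤ α ^ 2 * h ^ (2 * α + 1 - γ) / (1 + γ - 2 * α) := by
    refine (setIntegral_mono_on (hI.mono_set (Ioi_subset_Ioi hh.le))
      (integrableOn_incrMajorant_bound_right hh hα₁) measurableSet_Ioi
      fun u hu => incrMajorant_le_right (hh.trans hu)).trans_eq ?_
    have hpow : h ^ 2 * h ^ (2 * α - 2 - γ + 1) = h ^ (2 * α + 1 - γ) := by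
      rw [← rpow_two h, ← rpow_add hh]
      ring_nf
    have hne : 1 + γ - 2 * α ≠ 0 := by linarith
    rw [integral_const_mul, integral_Ioi_rpow_of_lt (by linarith) hh, ← hpow,
      show 2 * α - 2 - γ + 1 = -(1 + γ - 2 * α) by ring]
    field_simp
  rw [← Ioc_union_Ioi_eq_Ioi hh.le, setIntegral_union Ioc_disjoint_Ioi_same measurableSet_Ioi
    (hI.mono_set Ioc_subset_Ioi_self) (hI.mono_set (Ioi_subset_Ioi hh.le))]
  exact (add_le_add hleft hright).trans_eq (by ring)

end Majorant

section Terms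

variable {α γ s t : ℝ}

lemma rpow_sub_mul_rpow_le {u : ℝ} (hs : 0 ≤ s) (hu : u ∈ Ioo s t) (hγ₀ : 0 ≤ γ) :
    (t - u) ^ (2 * α) * u ^ (-γ)
      ≤ (((t - s) / 2) ^ (2 * α) + (t - s) ^ (2 * α)) * (u - s) ^ (-γ)
        + (t - u) ^ (2 * α - γ) := by
  obtain ⟨hsu, hut⟩ := hu
  have hus : 0 < u - s := sub_pos.2 hsu
  have htu : 0 < t - u := sub_pos.2 hut
  have hc : 0 ≤ ((t - s) / 2) ^ (2 * α) + (t - s) ^ (2 * α) := by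
    have : 0 ≤ t - s := by linarith
    positivity
  rcases le_total (u - s) (t - u) with hle | hle
  · have hmid : (t - u) ^ (2 * α) ≤ ((t - s) / 2) ^ (2 * α) + (t - s) ^ (2 * α) :=
      rpow_le_rpow_add_rpow_of_mem_Icc (by linarith) ⟨by linarith, by linarith⟩
    have := mul_le_mul hmid (rpow_le_rpow_of_nonpos (y := u) hus (by linarith) (neg_nonpos.2 hγ₀))
      (rpow_nonneg (by linarith) _) hc
    linarith [rpow_nonneg htu.le (2 * α - γ)]
  · have := mul_le_mul_of_nonneg_left
      (rpow_le_rpow_of_nonpos (y := u) htu (by linarith) (neg_nonpos.2 hγ₀))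
      (rpow_nonneg htu.le (2 * α))
    rw [← rpow_add htu, ← sub_eq_add_neg] at this
    linarith [mul_nonneg hc (rpow_nonneg hus.le (-γ))]

theorem integral_rpow_sub_mul_rpow_le (hs : 0 ≤ s) (hst : s < t) (hγ₀ : 0 ≤ γ) (hγ₁ : γ < 1)
    (hα₀ : 0 < 2 * α + 1 - γ) :
    ∫ u in Ioo s t, (t - u) ^ (2 * α) * u ^ (-γ)
      ≤ ((2 ^ (-(2 * α)) + 1) / (1 - γ) + 1 / (2 * α + 1 - γ)) * (t - s) ^ (2 * α + 1 - γ) := by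
  have hh : 0 < t - s := sub_pos.2 hst
  set c := ((t - s) / 2) ^ (2 * α) + (t - s) ^ (2 * α) with hc_def
  have hleft : IntervalIntegrable (fun u => (u - s) ^ (-γ)) volume s t := by
    simpa using (intervalIntegral.intervalIntegrable_rpow' (a := 0) (b := t - s)
      (by linarith)).comp_sub_right s
  have hright : IntervalIntegrable (fun u => (t - u) ^ (2 * α - γ)) volume s t := by
    simpa using (intervalIntegral.intervalIntegrable_rpow' (a := t - s) (b := 0)
      (by linarith)).comp_sub_left t
  have hc : c * (t - s) ^ (1 - γ) = (2 ^ (-(2 * α)) + 1) * (t - s) ^ (2 * α + 1 - γ) := by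
    rw [hc_def, div_rpow hh.le zero_le_two, rpow_neg zero_le_two,
      show 2 * α + 1 - γ = 2 * α + (1 - γ) by ring, rpow_add hh]
    ring
  calc ∫ u in Ioo s t, (t - u) ^ (2 * α) * u ^ (-γ)
      ≤ ∫ u in Ioo s t, (c * (u - s) ^ (-γ) + (t - u) ^ (2 * α - γ)) := by
        refine integral_mono_of_nonneg ?_ ?_ (ae_restrict_of_forall_mem measurableSet_Ioo
          fun u hu => rpow_sub_mul_rpow_le hs hu hγ₀)
        · exact ae_restrict_of_forall_mem measurableSet_Ioo fun u hu =>
            mul_nonneg (rpow_nonneg (by linarith [hu.2]) _) (rpow_nonneg (by linarith [hu.1]) _)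
        · exact ((hleft.const_mul c).add hright).1.mono_set Ioo_subset_Ioc_self
    _ = c * ((t - s) ^ (1 - γ) / (1 - γ)) + (t - s) ^ (2 * α + 1 - γ) / (2 * α + 1 - γ) := by
        rw [← integral_Ioc_eq_integral_Ioo, ← intervalIntegral.integral_of_le hst.le,
          intervalIntegral.integral_add (hleft.const_mul c) hright,
          intervalIntegral.integral_const_mul,
          intervalIntegral.integral_comp_sub_right (fun v => v ^ (-γ)),
          intervalIntegral.integral_comp_sub_left (fun v => v ^ (2 * α - γ)), sub_self, sub_self,
          integral_rpow_from_zero (by linarith), integral_rpow_from_zero (by linarith)]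
        ring_nf
    _ = ((2 ^ (-(2 * α)) + 1) / (1 - γ) + 1 / (2 * α + 1 - γ)) * (t - s) ^ (2 * α + 1 - γ) := by
        rw [← mul_div_assoc, hc]
        ring

lemma sq_rpow_sub_sub_rpow_mul_rpow_le {u : ℝ} (hu : u ∈ Ioo 0 s) (hst : s < t) (hα : α ≤ 1)
    (hγ₀ : 0 ≤ γ) :
    ((t - u) ^ α - (s - u) ^ α) ^ 2 * u ^ (-γ)
      ≤ incrMajorant α γ (t - s) u + incrMajorant α γ (t - s) (s - u) := by
  obtain ⟨hu, hus⟩ := hu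
  have hh : 0 ≤ t - s := by linarith
  have hsu : 0 < s - u := sub_pos.2 hus
  rw [show t - u = (s - u) + (t - s) by ring]
  rcases le_total u (s - u) with hle | hle
  · exact (sq_rpow_add_sub_rpow_mul_rpow_le_incrMajorant hu hle le_rfl hh hα hγ₀).trans
      (le_add_of_nonneg_right (incrMajorant_nonneg hh hsu.le))
  · exact (sq_rpow_add_sub_rpow_mul_rpow_le_incrMajorant hsu le_rfl hle hh hα hγ₀).trans
      (le_add_of_nonneg_left (incrMajorant_nonneg hh hu.le))

theorem integral_sq_rpow_sub_sub_rpow_le (hs : 0 < s) (hst : s < t) (hγ₀ : 0 ≤ γ) (hγ₁ : γ < 1)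
    (hα₀ : 0 < 2 * α + 1 - γ) (hα₁ : 2 * α < 1 + γ) :
    ∫ u in Ioo 0 s, ((t - u) ^ α - (s - u) ^ α) ^ 2 * u ^ (-γ)
      ≤ 2 * ∫ u in Ioi 0, incrMajorant α γ (t - s) u := by
  have hh : 0 < t - s := sub_pos.2 hst
  set N := incrMajorant α γ (t - s)
  have hNIoi := integrableOn_incrMajorant hh hγ₁ hα₀ hα₁
  have hN : IntervalIntegrable N volume 0 s :=
    (intervalIntegrable_iff_integrableOn_Ioc_of_le hs.le).2 (hNIoi.mono_set Ioc_subset_Ioi_self)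
  have hNreflect : IntervalIntegrable (fun u => N (s - u)) volume 0 s := by
    simpa using (hN.comp_sub_left s).symm
  calc ∫ u in Ioo 0 s, ((t - u) ^ α - (s - u) ^ α) ^ 2 * u ^ (-γ)
      ≤ ∫ u in Ioo 0 s, (N u + N (s - u)) := by
        refine integral_mono_of_nonneg ?_ ?_ (ae_restrict_of_forall_mem measurableSet_Ioo
          fun u hu => sq_rpow_sub_sub_rpow_mul_rpow_le hu hst (by linarith) hγ₀)
        · exact ae_restrict_of_forall_mem measurableSet_Ioo fun u hu =>
            mul_nonneg (sq_nonneg _) (rpow_nonneg hu.1.le _)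
        · exact (hN.add hNreflect).1.mono_set Ioo_subset_Ioc_self
    _ = 2 * ∫ u in Ioc 0 s, N u := by
        rw [← integral_Ioc_eq_integral_Ioo, ← intervalIntegral.integral_of_le hs.le,
          intervalIntegral.integral_add hN hNreflect, intervalIntegral.integral_comp_sub_left N s,
          sub_self, sub_zero, intervalIntegral.integral_of_le hs.le, two_mul]
    _ ≤ 2 * ∫ u in Ioi 0, N u :=
        mul_le_mul_of_nonneg_left (setIntegral_mono_set hNIoi
          (ae_restrict_of_forall_mem measurableSet_Ioi fun u hu =>
            incrMajorant_nonneg hh.le (le_of_lt hu)) Ioc_subset_Ioi_self.eventuallyLE) two_pos.le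

theorem integral_sq_rpow_add_sub_rpow_le (hs : 0 ≤ s) (hst : s < t) (hγ₀ : 0 ≤ γ) (hγ₁ : γ < 1)
    (hα₀ : 0 < 2 * α + 1 - γ) (hα₁ : 2 * α < 1 + γ) :
    ∫ u in Ioi 0, ((t + u) ^ α - (s + u) ^ α) ^ 2 * u ^ (-γ)
      ≤ ∫ u in Ioi 0, incrMajorant α γ (t - s) u := by
  have hh : 0 < t - s := sub_pos.2 hst
  refine integral_mono_of_nonneg ?_ (integrableOn_incrMajorant hh hγ₁ hα₀ hα₁) ?_
  · exact ae_restrict_of_forall_mem measurableSet_Ioi fun u hu =>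
      mul_nonneg (sq_nonneg _) (rpow_nonneg (le_of_lt hu) _)
  · refine ae_restrict_of_forall_mem measurableSet_Ioi fun u (hu : 0 < u) => ?_
    dsimp only
    rw [show t + u = (s + u) + (t - s) by ring]
    exact sq_rpow_add_sub_rpow_mul_rpow_le_incrMajorant hu (by linarith) le_rfl hh.le
      (by linarith) hγ₀

end Terms

theorem gfbm_stmt8 (α γ H : ℝ) (hγ0 : 0 ≤ γ) (hγ1 : γ < 1)
    (hα0 : -(1 - γ) / 2 < α) (hα1 : α < (1 + γ) / 2)
    (hH : H = α - γ / 2 + 1 / 2) :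
    ∀ T : ℝ, 0 < T → ∃ C : ℝ, 0 < C ∧
      ∀ s t : ℝ, 0 < s → s < t → t ≤ T →
        (∫ u in Set.Ioo s t, (t - u) ^ (2 * α) * u ^ (-γ))
          + (∫ u in Set.Ioo 0 s, ((t - u) ^ α - (s - u) ^ α) ^ 2 * u ^ (-γ))
          + (∫ u in Set.Ioi (0 : ℝ), ((t + u) ^ α - (s + u) ^ α) ^ 2 * u ^ (-γ))
        ≤ C * (t - s) ^ (2 * H) := by
  intro _ _
  have hγ : 0 < 1 - γ := by linarith
  have hα₀ : 0 < 2 * α + 1 - γ := by linarith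
  have hα₁ : 2 * α < 1 + γ := by linarith
  have hC₁ : 0 < (2 ^ (-(2 * α)) + 1) / (1 - γ) := div_pos (by positivity) hγ
  have hC₂ : 0 < 1 / (2 * α + 1 - γ) := one_div_pos.2 hα₀
  have hC₃ : 0 < 1 / (1 - γ) := one_div_pos.2 hγ
  have hC₄ : 0 ≤ α ^ 2 / (1 + γ - 2 * α) := div_nonneg (sq_nonneg α) (by linarith)
  refine ⟨(2 ^ (-(2 * α)) + 1) / (1 - γ) + 1 / (2 * α + 1 - γ)
    + 3 * (1 / (1 - γ) + 1 / (2 * α + 1 - γ) + α ^ 2 / (1 + γ - 2 * α)), by linarith, ?_⟩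
  intro s t hs hst _
  rw [show 2 * H = 2 * α + 1 - γ by rw [hH]; ring]
  linarith [integral_rpow_sub_mul_rpow_le hs.le hst hγ0 hγ1 hα₀,
    integral_sq_rpow_sub_sub_rpow_le hs hst hγ0 hγ1 hα₀ hα₁,
    integral_sq_rpow_add_sub_rpow_le hs.le hst hγ0 hγ1 hα₀ hα₁,
    integral_incrMajorant_le (sub_pos.2 hst) hγ1 hα₀ hα₁]
end

section
/- With Ψ(s,t) as the GFBM covariance and H = α − γ/2 + 1/2, for fixed 0 < s < t one has lim Ψ(ns, mt)/(n^H m^H) = 0 as n → ∞ with m/n → ∞. -/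
/-!
Write `A = n s` and `B = m t`, so that `A / B → 0`. For `2 A ≤ B` both integrals are bounded by
powers. In the first one `B - u` is comparable to `B`, and `∫₀^A (A - u)^α u^(-γ) du` is of order
`A^(1 + α - γ)`. In the second one `|(x + u)^α - u^α| ≤ x^θ u^(α - θ)` for every
`θ ∈ [max α 0, 1]`; splitting at `u = B` makes it `O(A^θ B^(2H - θ))` for any
`θ ∈ (H, min 1 (2H - max α 0))`. Both exponents of `A` exceed `H`, so after division by
`n^H m^H` only positive powers of `n / m` remain.
-/

open MeasureTheory Set Real Filter

lemma abs_one_add_rpow_sub_one_le {α θ x : ℝ} (hα₀ : -1 ≤ α) (hα₁ : α ≤ 1)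
    (hθ₀ : max α 0 ≤ θ) (hθ₁ : θ ≤ 1) (hx : 0 ≤ x) :
    |(1 + x) ^ α - 1| ≤ x ^ θ := by
  have h1x : 1 ≤ 1 + x := by linarith
  obtain ⟨hle_self, hle_pow⟩ :
      |(1 + x) ^ α - 1| ≤ x ∧ |(1 + x) ^ α - 1| ≤ x ^ max α 0 := by
    rcases le_total 0 α with hα | hα
    · have hsub : (1 + x) ^ α ≤ 1 + x ^ α := by
        simpa using rpow_add_le_add_rpow zero_le_one hx hα hα₁
      have hlin : (1 + x) ^ α ≤ 1 + x := by
        simpa using rpow_le_rpow_of_exponent_le h1x hα₁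
      rw [abs_of_nonneg (by linarith [one_le_rpow h1x hα]), max_eq_left hα]
      exact ⟨by linarith, by linarith⟩
    · have hinv : (1 + x)⁻¹ ≤ (1 + x) ^ α := by
        simpa [rpow_neg_one] using rpow_le_rpow_of_exponent_le h1x hα₀
      have hmul : (1 + x) * (1 + x)⁻¹ = 1 := mul_inv_cancel₀ (by linarith)
      rw [abs_of_nonpos (by linarith [rpow_le_one_of_one_le_of_nonpos h1x hα]),
        max_eq_right hα, rpow_zero]
      constructor <;> nlinarith [rpow_nonneg (by linarith : (0 : ℝ) ≤ 1 + x) α]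
  rcases le_total x 1 with hx1 | hx1
  · calc |(1 + x) ^ α - 1| ≤ x := hle_self
      _ ≤ x ^ θ := by
        simpa using rpow_le_rpow_of_exponent_ge' hx hx1 (le_max_right α 0 |>.trans hθ₀) hθ₁
  · exact hle_pow.trans (rpow_le_rpow_of_exponent_le hx1 hθ₀)

lemma abs_add_rpow_sub_rpow_le {α θ A u : ℝ} (hα₀ : -1 ≤ α) (hα₁ : α ≤ 1)
    (hθ₀ : max α 0 ≤ θ) (hθ₁ : θ ≤ 1) (hA : 0 ≤ A) (hu : 0 < u) :
    |(A + u) ^ α - u ^ α| ≤ A ^ θ * u ^ (α - θ) := by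
  have hsplit : (A + u) ^ α = u ^ α * (1 + A / u) ^ α := by
    rw [← mul_rpow hu.le (by positivity), mul_add, mul_one, mul_div_cancel₀ _ hu.ne', add_comm]
  calc |(A + u) ^ α - u ^ α| = u ^ α * |(1 + A / u) ^ α - 1| := by
        rw [hsplit, ← mul_sub_one, abs_mul, abs_of_pos (rpow_pos_of_pos hu α)]
    _ ≤ u ^ α * (A / u) ^ θ := by
        gcongr
        exact abs_one_add_rpow_sub_one_le hα₀ hα₁ hθ₀ hθ₁ (by positivity)
    _ = A ^ θ * u ^ (α - θ) := by
        rw [div_rpow hA hu.le, rpow_sub hu]; ring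

lemma rpow_le_two_mul_rpow_of_half_le {p x y : ℝ} (hp : -1 ≤ p) (hx : 0 < x)
    (hxy : x / 2 ≤ y) (hyx : y ≤ x) : y ^ p ≤ 2 * x ^ p := by
  rcases le_total 0 p with hp₀ | hp₀
  · calc y ^ p ≤ x ^ p := rpow_le_rpow (by linarith) hyx hp₀
      _ ≤ 2 * x ^ p := by linarith [rpow_nonneg hx.le p]
  · calc y ^ p ≤ (x / 2) ^ p := rpow_le_rpow_of_nonpos (by positivity) hxy hp₀
      _ = (2 : ℝ) ^ (-p) * x ^ p := by
        rw [div_rpow hx.le zero_le_two, rpow_neg zero_le_two]; ring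
      _ ≤ 2 * x ^ p := by
        gcongr
        simpa using rpow_le_rpow_of_exponent_le one_le_two (show -p ≤ 1 by linarith)

lemma norm_setIntegral_union_le {X E : Type*} [MeasurableSpace X] [NormedAddCommGroup E]
    [NormedSpace ℝ E] {μ : Measure X} {f : X → E} {g₁ g₂ : X → ℝ} {s t : Set X}
    (hst : Disjoint s t) (hs : MeasurableSet s) (ht : MeasurableSet t)
    (hf : AEStronglyMeasurable f μ) (hg₁ : IntegrableOn g₁ s μ) (hg₂ : IntegrableOn g₂ t μ)
    (h₁ : ∀ x ∈ s, ‖f x‖ ≤ g₁ x) (h₂ : ∀ x ∈ t, ‖f x‖ ≤ g₂ x) :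
    ‖∫ x in s ∪ t, f x ∂μ‖ ≤ (∫ x in s, g₁ x ∂μ) + ∫ x in t, g₂ x ∂μ := by
  have b₁ : ∀ᵐ x ∂μ.restrict s, ‖f x‖ ≤ g₁ x := ae_restrict_of_forall_mem hs h₁
  have b₂ : ∀ᵐ x ∂μ.restrict t, ‖f x‖ ≤ g₂ x := ae_restrict_of_forall_mem ht h₂
  rw [setIntegral_union hst ht (hg₁.mono' hf.restrict b₁) (hg₂.mono' hf.restrict b₂)]
  exact (norm_add_le _ _).trans
    (add_le_add (norm_integral_le_of_norm_le hg₁ b₁) (norm_integral_le_of_norm_le hg₂ b₂))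

lemma abs_covariance_integral_Ioo_le {α γ A B : ℝ} (hα : -1 < α) (hγ : γ < 1)
    (hA : 0 < A) (hAB : 2 * A ≤ B) :
    |∫ u in Ioo 0 A, (B - u) ^ α * (A - u) ^ α * u ^ (-γ)| ≤
      4 * (1 / (1 - γ) + 1 / (1 + α)) * (A ^ (1 + α - γ) * B ^ α) := by
  set g : ℝ → ℝ := fun u => 4 * B ^ α * (A ^ α * u ^ (-γ) + A ^ (-γ) * (A - u) ^ α)
  have hpow_γ : IntervalIntegrable (fun u : ℝ => u ^ (-γ)) volume 0 A :=
    intervalIntegral.intervalIntegrable_rpow' (by linarith)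
  have hpow_α : IntervalIntegrable (fun u : ℝ => (A - u) ^ α) volume 0 A := by
    simpa using
      ((intervalIntegral.intervalIntegrable_rpow' hα (a := 0) (b := A)).comp_sub_left A).symm
  have hg_int : IntervalIntegrable g volume 0 A :=
    ((hpow_γ.const_mul _).add (hpow_α.const_mul _)).const_mul _
  have hg_eq :
      ∫ u in (0)..A, g u = 4 * (1 / (1 - γ) + 1 / (1 + α)) * (A ^ (1 + α - γ) * B ^ α) := by
    simp only [g, intervalIntegral.integral_const_mul]
    rw [intervalIntegral.integral_add (hpow_γ.const_mul _) (hpow_α.const_mul _),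
      intervalIntegral.integral_const_mul, intervalIntegral.integral_const_mul,
      intervalIntegral.integral_comp_sub_left (fun u => u ^ α), sub_self, sub_zero,
      integral_rpow (Or.inl (by linarith)), integral_rpow (Or.inl hα),
      zero_rpow (by linarith), zero_rpow (by linarith)]
    have e₁ : A ^ α * A ^ (-γ + 1) = A ^ (1 + α - γ) := by rw [← rpow_add hA]; ring_nf
    have e₂ : A ^ (-γ) * A ^ (α + 1) = A ^ (1 + α - γ) := by rw [← rpow_add hA]; ring_nf
    have : 1 - γ ≠ 0 := by linarith
    have : 1 + α ≠ 0 := by linarith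
    rw [sub_zero, sub_zero, ← mul_div_assoc, ← mul_div_assoc, e₁, e₂, neg_add_eq_sub,
      add_comm α]
    field_simp
  have hbound : ∀ u ∈ Ioo 0 A, ‖(B - u) ^ α * (A - u) ^ α * u ^ (-γ)‖ ≤ g u := by
    rintro u ⟨hu₀, huA⟩
    have hBu : (B - u) ^ α ≤ 2 * B ^ α :=
      rpow_le_two_mul_rpow_of_half_le hα.le (by linarith) (by linarith) (by linarith)
    -- `u` or `A - u` is at least `A / 2`, which tames the singularity at the other end
    have hAu :
        (A - u) ^ α * u ^ (-γ) ≤ 2 * (A ^ α * u ^ (-γ) + A ^ (-γ) * (A - u) ^ α) := by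
      have := rpow_nonneg (sub_nonneg.2 huA.le) α
      have := rpow_nonneg hu₀.le (-γ)
      have := rpow_nonneg hA.le (-γ)
      have := rpow_nonneg hA.le α
      rcases le_total u (A / 2) with hu | hu
      · have := rpow_le_two_mul_rpow_of_half_le hα.le hA (by linarith) (by linarith : A - u ≤ A)
        nlinarith
      · have := rpow_le_two_mul_rpow_of_half_le (by linarith : -1 ≤ -γ) hA hu huA.le
        nlinarith
    have hBu₀ : 0 ≤ B - u := by linarith
    have hAu₀ : 0 ≤ A - u := by linarith
    rw [Real.norm_of_nonneg (by positivity), mul_assoc]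
    calc (B - u) ^ α * ((A - u) ^ α * u ^ (-γ))
        ≤ (2 * B ^ α) * (2 * (A ^ α * u ^ (-γ) + A ^ (-γ) * (A - u) ^ α)) :=
          mul_le_mul hBu hAu (by positivity) (by linarith [rpow_nonneg hBu₀ α])
      _ = g u := by simp only [g]; ring
  rw [← Real.norm_eq_abs, ← hg_eq, intervalIntegral.integral_of_le hA.le,
    integral_Ioc_eq_integral_Ioo]
  exact norm_integral_le_of_norm_le
    ((intervalIntegrable_iff_integrableOn_Ioo_of_le hA.le).1 hg_int)
    (ae_restrict_of_forall_mem measurableSet_Ioo hbound)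

lemma abs_rpow_increments_mul_le {α γ θ θ' A B u : ℝ} (hα₀ : -1 ≤ α) (hα₁ : α ≤ 1)
    (hθ₀ : max α 0 ≤ θ) (hθ₁ : θ ≤ 1) (hθ'₀ : max α 0 ≤ θ') (hθ'₁ : θ' ≤ 1)
    (hA : 0 ≤ A) (hB : 0 ≤ B) (hu : 0 < u) :
    |((B + u) ^ α - u ^ α) * ((A + u) ^ α - u ^ α) * u ^ (-γ)| ≤
      A ^ θ * B ^ θ' * u ^ (2 * α - θ' - θ - γ) := by
  rw [abs_mul, abs_mul, abs_of_pos (rpow_pos_of_pos hu _)]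
  calc |(B + u) ^ α - u ^ α| * |(A + u) ^ α - u ^ α| * u ^ (-γ)
      ≤ (B ^ θ' * u ^ (α - θ')) * (A ^ θ * u ^ (α - θ)) * u ^ (-γ) := by
        gcongr
        · exact abs_add_rpow_sub_rpow_le hα₀ hα₁ hθ'₀ hθ'₁ hB hu
        · exact abs_add_rpow_sub_rpow_le hα₀ hα₁ hθ₀ hθ₁ hA hu
    _ = A ^ θ * B ^ θ' * u ^ (2 * α - θ' - θ - γ) := by
        rw [show 2 * α - θ' - θ - γ = (α - θ') + (α - θ) + -γ by ring, rpow_add hu,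
          rpow_add hu]
        ring

lemma abs_covariance_integral_Ioi_le {α γ θ A B : ℝ} (hα₀ : -1 ≤ α) (hα₁ : α ≤ 1)
    (hθ₀ : max α 0 ≤ θ) (hθ₁ : θ ≤ 1) (hθ_far : 2 * α - γ < θ)
    (hθ_near : θ < 2 * α - max α 0 - γ + 1) (hA : 0 < A) (hB : 0 < B) :
    |∫ u in Ioi 0, ((B + u) ^ α - u ^ α) * ((A + u) ^ α - u ^ α) * u ^ (-γ)| ≤
      (1 / (2 * α - max α 0 - θ - γ + 1) + 1 / (θ + γ - 2 * α)) *
        (A ^ θ * B ^ (2 * α + 1 - γ - θ)) := by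
  set θ₀ := max α 0
  have hθ₀₁ : θ₀ ≤ 1 := max_le hα₁ zero_le_one
  have hnear : ∀ u ∈ Ioc 0 B,
      ‖((B + u) ^ α - u ^ α) * ((A + u) ^ α - u ^ α) * u ^ (-γ)‖ ≤
        A ^ θ * B ^ θ₀ * u ^ (2 * α - θ₀ - θ - γ) := fun u hu =>
    abs_rpow_increments_mul_le hα₀ hα₁ hθ₀ hθ₁ le_rfl hθ₀₁ hA.le hB.le hu.1
  have hfar : ∀ u ∈ Ioi B,
      ‖((B + u) ^ α - u ^ α) * ((A + u) ^ α - u ^ α) * u ^ (-γ)‖ ≤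
        A ^ θ * B ^ (1 : ℝ) * u ^ (2 * α - 1 - θ - γ) := fun u hu =>
    abs_rpow_increments_mul_le hα₀ hα₁ hθ₀ hθ₁ (max_le (by linarith) zero_le_one) le_rfl
      hA.le hB.le (hB.trans hu)
  have hint_near : IntegrableOn (fun u : ℝ => u ^ (2 * α - θ₀ - θ - γ)) (Ioc 0 B) :=
    (intervalIntegrable_iff_integrableOn_Ioc_of_le hB.le).1
      (intervalIntegral.intervalIntegrable_rpow' (by linarith))
  have hint_far : IntegrableOn (fun u : ℝ => u ^ (2 * α - 1 - θ - γ)) (Ioi B) :=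
    integrableOn_Ioi_rpow_of_lt (by linarith) hB
  have key := norm_setIntegral_union_le (Ioc_disjoint_Ioi le_rfl) measurableSet_Ioc
    measurableSet_Ioi (by fun_prop : Measurable fun u : ℝ =>
      ((B + u) ^ α - u ^ α) * ((A + u) ^ α - u ^ α) * u ^ (-γ)).aestronglyMeasurable
    (hint_near.const_mul (A ^ θ * B ^ θ₀)) (hint_far.const_mul (A ^ θ * B ^ (1 : ℝ)))
    hnear hfar
  rw [Ioc_union_Ioi_eq_Ioi hB.le, Real.norm_eq_abs, integral_const_mul, integral_const_mul,
    ← intervalIntegral.integral_of_le hB.le, integral_rpow (Or.inl (by linarith)),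
    integral_Ioi_rpow_of_lt (by linarith) hB, zero_rpow (by linarith)] at key
  refine key.trans_eq ?_
  have e_near : B ^ θ₀ * B ^ (2 * α - θ₀ - θ - γ + 1) = B ^ (2 * α + 1 - γ - θ) := by
    rw [← rpow_add hB]; ring_nf
  have e_far : B ^ (1 : ℝ) * B ^ (-(θ + γ - 2 * α)) = B ^ (2 * α + 1 - γ - θ) := by
    rw [← rpow_add hB]; ring_nf
  have : 2 * α - θ₀ - θ - γ + 1 ≠ 0 := by linarith
  have : θ + γ - 2 * α ≠ 0 := by linarith
  rw [sub_zero, show 2 * α - 1 - θ - γ + 1 = -(θ + γ - 2 * α) by ring, neg_div_neg_eq]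
  calc A ^ θ * B ^ θ₀ * (B ^ (2 * α - θ₀ - θ - γ + 1) / (2 * α - θ₀ - θ - γ + 1)) +
        A ^ θ * B ^ (1 : ℝ) * (B ^ (-(θ + γ - 2 * α)) / (θ + γ - 2 * α))
      = A ^ θ * (B ^ θ₀ * B ^ (2 * α - θ₀ - θ - γ + 1)) / (2 * α - θ₀ - θ - γ + 1) +
        A ^ θ * (B ^ (1 : ℝ) * B ^ (-(θ + γ - 2 * α))) / (θ + γ - 2 * α) := by ring
    _ = _ := by rw [e_near, e_far]; ring

lemma mul_rpow_mul_rpow_div {n m s t a b H : ℝ} (hn : 0 < n) (hm : 0 < m) (hs : 0 ≤ s)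
    (ht : 0 ≤ t) (hab : a + b = 2 * H) :
    (n * s) ^ a * (m * t) ^ b / (n ^ H * m ^ H) = s ^ a * t ^ b * (n / m) ^ (a - H) := by
  rw [mul_rpow hn.le hs, mul_rpow hm.le ht, div_rpow hn.le hm.le, rpow_sub hn, rpow_sub hm,
    show b = (H - a) + H by linarith, rpow_add hm, rpow_sub hm]
  have := rpow_pos_of_pos hn H
  have := rpow_pos_of_pos hm H
  have := rpow_pos_of_pos hm a
  field_simp

lemma exists_covariance_integrals_bound {α γ : ℝ} (hγ₀ : 0 ≤ γ) (hγ₁ : γ < 1)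
    (hα₀ : -(1 / 2) + γ / 2 < α) (hα₁ : α < 1 / 2 + γ / 2) :
    ∃ θ K₁ K₂ : ℝ, α - γ / 2 + 1 / 2 < θ ∧ ∀ A B : ℝ, 0 < A → 2 * A ≤ B →
      |∫ u in Ioo 0 A, (B - u) ^ α * (A - u) ^ α * u ^ (-γ)| +
        |∫ u in Ioi 0, ((B + u) ^ α - u ^ α) * ((A + u) ^ α - u ^ α) * u ^ (-γ)| ≤
      K₁ * (A ^ (1 + α - γ) * B ^ α) + K₂ * (A ^ θ * B ^ (2 * α + 1 - γ - θ)) := by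
  have hαH : max α 0 < α - γ / 2 + 1 / 2 := max_lt (by linarith) (by linarith)
  obtain ⟨θ, hHθ, hθ⟩ : ∃ θ, α - γ / 2 + 1 / 2 < θ ∧
      θ < min 1 (2 * α - γ + 1 - max α 0) :=
    exists_between (lt_min (by linarith) (by linarith))
  have hθ₁ := hθ.trans_le (min_le_left _ _)
  have hθ₂ := hθ.trans_le (min_le_right _ _)
  refine ⟨θ, _, _, hHθ, fun A B hA hAB => add_le_add
    (abs_covariance_integral_Ioo_le (by linarith) hγ₁ hA hAB)
    (abs_covariance_integral_Ioi_le (by linarith) (by linarith) (by linarith) hθ₁.le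
      (by linarith) (by linarith) hA (by linarith))⟩

theorem gfbm_stmt14 (α γ H c s t : ℝ) (hγ0 : 0 ≤ γ) (hγ1 : γ < 1)
    (hα0 : -(1 / 2) + γ / 2 < α) (hα1 : α < 1 / 2 + γ / 2)
    (hH : H = α - γ / 2 + 1 / 2) (hs : 0 < s) (hst : s < t)
    (Ψ : ℝ → ℝ → ℝ)
    (hΨ : ∀ a b : ℝ, 0 ≤ a → a ≤ b →
      Ψ a b = c ^ 2 * (∫ u in Set.Ioo 0 a, (b - u) ^ α * (a - u) ^ α * u ^ (-γ))
        + c ^ 2 * ∫ u in Set.Ioi (0 : ℝ),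
            ((b + u) ^ α - u ^ α) * ((a + u) ^ α - u ^ α) * u ^ (-γ)) :
    ∀ n m : ℕ → ℝ, (∀ k, 0 < n k) → (∀ k, 0 < m k) →
      Tendsto n atTop atTop → Tendsto (fun k => m k / n k) atTop atTop →
      Tendsto (fun k => Ψ (n k * s) (m k * t) / ((n k) ^ H * (m k) ^ H))
        atTop (nhds 0) := by
  intro n m hn hm _ hmn
  have ht : 0 < t := hs.trans hst
  obtain ⟨θ, K₁, K₂, hHθ, hbound⟩ := exists_covariance_integrals_bound hγ0 hγ1 hα0 hα1
  have hscaled : ∀ᶠ k in atTop, ‖Ψ (n k * s) (m k * t) / (n k ^ H * m k ^ H)‖ ≤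
      c ^ 2 * (K₁ * (s ^ (1 + α - γ) * t ^ α * (n k / m k) ^ (1 + α - γ - H)) +
        K₂ * (s ^ θ * t ^ (2 * α + 1 - γ - θ) * (n k / m k) ^ (θ - H))) := by
    filter_upwards [hmn.eventually_ge_atTop (2 * s / t)] with k hk
    have hA : 0 < n k * s := mul_pos (hn k) hs
    have hAB : 2 * (n k * s) ≤ m k * t := by
      rw [div_le_div_iff₀ ht (hn k)] at hk; linarith
    have hD : 0 < n k ^ H * m k ^ H :=
      mul_pos (rpow_pos_of_pos (hn k) H) (rpow_pos_of_pos (hm k) H)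
    rw [hΨ _ _ hA.le (by linarith), ← mul_add, norm_div, norm_mul,
      Real.norm_of_nonneg (sq_nonneg c), Real.norm_of_nonneg hD.le, mul_div_assoc,
      ← mul_rpow_mul_rpow_div (hn k) (hm k) hs.le ht.le (by linarith),
      ← mul_rpow_mul_rpow_div (hn k) (hm k) hs.le ht.le (by linarith)]
    refine mul_le_mul_of_nonneg_left ?_ (sq_nonneg c)
    rw [← mul_div_assoc, ← mul_div_assoc, ← add_div]
    gcongr
    exact (norm_add_le _ _).trans (hbound _ _ hA hAB)
  refine squeeze_zero_norm' hscaled ?_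
  have hr : Tendsto (fun k => n k / m k) atTop (nhds 0) :=
    hmn.inv_tendsto_atTop.congr fun k => inv_div _ _
  have hpow : ∀ e : ℝ, 0 < e → Tendsto (fun k => (n k / m k) ^ e) atTop (nhds 0) :=
    fun e he => by simpa [zero_rpow he.ne'] using hr.rpow_const (Or.inr he.le)
  simpa using (((hpow _ (by linarith)).const_mul _).const_mul _ |>.add
    (((hpow _ (by linarith)).const_mul _).const_mul _)).const_mul (c ^ 2)
end

section
/- For 0 < α < (1+γ)/2, 0 ≤ γ < 1, H = α − γ/2 + 1/2, and 0 < s < t, let φ(u) = u·exp(−(log u^{−1})^r) for some r > 0 and u ∈ (0,1). Then (1/(u^H φ(u)^H)) ∫₀^{φ(u)s} (ut−v)^α (φ(u)s−v)^α v^(−γ) dv ≤ (ts)^H ((s/t)·(φ(u)/u))^{(1−γ)/2} · Beta(α+1, 1−γ), and this tends to 0 as u → 0+. -/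
open MeasureTheory Set Real Filter

/-!
On the range of integration 0 < v < φ(u)s < ut, so (ut − v)^α ≤ (ut)^α. The substitution
v = θ φ(u) s turns what remains into (φ(u)s)^(α+1−γ) times the Beta integral
∫₀¹ θ^α (1−θ)^(−γ), and since α = H − (1−γ)/2 and α + 1 − γ = H + (1−γ)/2 the powers of
u, φ(u), s, t collect into the stated prefactor. That prefactor tends to 0 because
φ(u)/u = exp(−(log u⁻¹)^r) → 0 and (1−γ)/2 > 0.
-/

lemma setIntegral_Ioo_sub_rpow_mul_rpow (a b : ℝ) {c : ℝ} (hc : 0 < c) :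
    ∫ v in Ioo 0 c, (c - v) ^ a * v ^ b
      = c ^ (a + b + 1) * ∫ θ in Ioo (0:ℝ) 1, θ ^ a * (1 - θ) ^ b := by
  simp only [← integral_Ioc_eq_integral_Ioo, ← intervalIntegral.integral_of_le hc.le,
    ← intervalIntegral.integral_of_le zero_le_one]
  have hflip : ∫ v in (0:ℝ)..c, (c - v) ^ a * v ^ b = ∫ v in (0:ℝ)..c, v ^ a * (c - v) ^ b := by
    have h := intervalIntegral.integral_comp_sub_left (a := 0) (b := c)
      (fun v => v ^ a * (c - v) ^ b) c
    simpa only [sub_sub_cancel, sub_zero, sub_self] using h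
  have hscale : ∫ v in (0:ℝ)..c, v ^ a * (c - v) ^ b
      = c • ∫ θ in (0:ℝ)..1, (c * θ) ^ a * (c - c * θ) ^ b := by
    simpa only [mul_zero, mul_one] using
      (intervalIntegral.smul_integral_comp_mul_left (a := 0) (b := 1)
        (fun v => v ^ a * (c - v) ^ b) c).symm
  have hpoint : ∀ θ ∈ uIcc (0:ℝ) 1,
      (c * θ) ^ a * (c - c * θ) ^ b = c ^ (a + b) * (θ ^ a * (1 - θ) ^ b) := by
    intro θ hθ
    rw [uIcc_of_le zero_le_one] at hθ
    rw [← mul_one_sub, mul_rpow hc.le hθ.1, mul_rpow hc.le (by linarith [hθ.2]), rpow_add hc]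
    ring
  rw [hflip, hscale, intervalIntegral.integral_congr hpoint, intervalIntegral.integral_const_mul,
    smul_eq_mul, rpow_add_one hc.ne']
  ring

lemma integrableOn_Ioo_sub_rpow_mul_rpow_neg {α γ c : ℝ} (hα : 0 ≤ α) (hγ : γ < 1) (hc : 0 ≤ c) :
    IntegrableOn (fun v => (c - v) ^ α * v ^ (-γ)) (Ioo 0 c) :=
  (intervalIntegrable_iff_integrableOn_Ioo_of_le hc).1 <|
    (intervalIntegral.intervalIntegrable_rpow' (by linarith)).continuousOn_mul
      ((continuous_const.sub continuous_id).rpow_const fun _ => Or.inr hα).continuousOn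

lemma setIntegral_Ioo_sub_rpow_mul_sub_rpow_mul_rpow_neg_le {α γ a c : ℝ} (hα : 0 ≤ α)
    (hγ : γ < 1) (hc : 0 < c) (hca : c ≤ a) :
    ∫ v in Ioo 0 c, (a - v) ^ α * (c - v) ^ α * v ^ (-γ)
      ≤ a ^ α * c ^ (α + 1 - γ) * ∫ θ in Ioo (0:ℝ) 1, θ ^ α * (1 - θ) ^ (-γ) := by
  have hnonneg : ∀ v ∈ Ioo 0 c, 0 ≤ (c - v) ^ α * v ^ (-γ) := fun v hv =>
    mul_nonneg (rpow_nonneg (by linarith [hv.2]) _) (rpow_nonneg hv.1.le _)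
  calc ∫ v in Ioo 0 c, (a - v) ^ α * (c - v) ^ α * v ^ (-γ)
      ≤ ∫ v in Ioo 0 c, a ^ α * ((c - v) ^ α * v ^ (-γ)) := by
        refine integral_mono_of_nonneg ?_
          ((integrableOn_Ioo_sub_rpow_mul_rpow_neg hα hγ hc.le).const_mul _) ?_ <;>
        filter_upwards [ae_restrict_mem measurableSet_Ioo] with v hv
        · rw [mul_assoc]
          exact mul_nonneg (rpow_nonneg (by linarith [hv.2]) _) (hnonneg v hv)
        · rw [mul_assoc]
          refine mul_le_mul_of_nonneg_right ?_ (hnonneg v hv)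
          exact rpow_le_rpow (by linarith [hv.2]) (by linarith [hv.1]) hα
    _ = a ^ α * c ^ (α + 1 - γ) * ∫ θ in Ioo (0:ℝ) 1, θ ^ α * (1 - θ) ^ (-γ) := by
        rw [integral_const_mul, setIntegral_Ioo_sub_rpow_mul_rpow _ _ hc, mul_assoc,
          show α + -γ + 1 = α + 1 - γ by ring]

lemma rpow_sub_mul_rpow_add_div (H p : ℝ) {u t f s : ℝ} (hu : 0 < u) (ht : 0 < t) (hf : 0 < f)
    (hs : 0 < s) :
    (u * t) ^ (H - p) * (f * s) ^ (H + p) / (u ^ H * f ^ H)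
      = (t * s) ^ H * ((s / t) * (f / u)) ^ p := by
  rw [mul_rpow hu.le ht.le, mul_rpow hf.le hs.le, mul_rpow ht.le hs.le,
    mul_rpow (div_nonneg hs.le ht.le) (div_nonneg hf.le hu.le), div_rpow hs.le ht.le,
    div_rpow hf.le hu.le, rpow_sub hu, rpow_sub ht, rpow_add hf, rpow_add hs]
  field_simp

lemma one_div_rpow_mul_setIntegral_le {α γ H s t u f : ℝ} (hα : 0 ≤ α) (hγ : γ < 1)
    (hH : H = α - γ / 2 + 1 / 2) (hs : 0 < s) (hst : s ≤ t) (hf : 0 < f) (hfu : f ≤ u) :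
    1 / (u ^ H * f ^ H) * ∫ v in Ioo 0 (f * s), (u * t - v) ^ α * (f * s - v) ^ α * v ^ (-γ)
      ≤ (t * s) ^ H * ((s / t) * (f / u)) ^ ((1 - γ) / 2)
          * ∫ θ in Ioo (0:ℝ) 1, θ ^ α * (1 - θ) ^ (-γ) := by
  have hu : 0 < u := hf.trans_le hfu
  have ht : 0 < t := hs.trans_le hst
  have hexp := rpow_sub_mul_rpow_add_div H ((1 - γ) / 2) hu ht hf hs
  rw [show H - (1 - γ) / 2 = α by rw [hH]; ring, show H + (1 - γ) / 2 = α + 1 - γ by rw [hH]; ring]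
    at hexp
  calc 1 / (u ^ H * f ^ H) * ∫ v in Ioo 0 (f * s), (u * t - v) ^ α * (f * s - v) ^ α * v ^ (-γ)
      ≤ 1 / (u ^ H * f ^ H) * ((u * t) ^ α * (f * s) ^ (α + 1 - γ)
          * ∫ θ in Ioo (0:ℝ) 1, θ ^ α * (1 - θ) ^ (-γ)) := by
        gcongr
        exact setIntegral_Ioo_sub_rpow_mul_sub_rpow_mul_rpow_neg_le hα hγ (by positivity)
          (mul_le_mul hfu hst hs.le hu.le)
    _ = (t * s) ^ H * ((s / t) * (f / u)) ^ ((1 - γ) / 2)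
          * ∫ θ in Ioo (0:ℝ) 1, θ ^ α * (1 - θ) ^ (-γ) := by
        rw [← hexp]
        ring

lemma exp_neg_log_inv_rpow_lt_one {r u : ℝ} (hu0 : 0 < u) (hu1 : u < 1) :
    exp (-(log u⁻¹) ^ r) < 1 :=
  exp_lt_one_iff.2 (neg_lt_zero.2 (rpow_pos_of_pos (log_pos (one_lt_inv₀ hu0 |>.2 hu1)) r))

lemma tendsto_exp_neg_log_inv_rpow_nhdsGT_zero {r : ℝ} (hr : 0 < r) :
    Tendsto (fun u => exp (-(log u⁻¹) ^ r)) (nhdsWithin 0 (Ioi 0)) (nhds 0) := by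
  have hlog : Tendsto (fun u : ℝ => log u⁻¹) (nhdsWithin 0 (Ioi 0)) atTop := by
    simpa only [log_inv, Function.comp_def] using
      tendsto_neg_atBot_atTop.comp tendsto_log_nhdsGT_zero
  exact tendsto_exp_atBot.comp (tendsto_neg_atTop_atBot.comp ((tendsto_rpow_atTop hr).comp hlog))

theorem gfbm_stmt15_general (α γ H s t r : ℝ) (hγ1 : γ < 1)
    (hα0 : 0 < α) (hH : H = α - γ / 2 + 1 / 2)
    (hs : 0 < s) (hst : s < t) (hr : 0 < r)
    (φ : ℝ → ℝ) (hφ : ∀ u : ℝ, φ u = u * Real.exp (-(Real.log u⁻¹) ^ r)) :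
    (∀ u ∈ Set.Ioo (0 : ℝ) 1,
      (1 / (u ^ H * (φ u) ^ H)) *
          (∫ v in Set.Ioo 0 (φ u * s), (u * t - v) ^ α * (φ u * s - v) ^ α * v ^ (-γ))
        ≤ (t * s) ^ H * ((s / t) * (φ u / u)) ^ ((1 - γ) / 2) *
            ∫ θ in Set.Ioo (0 : ℝ) 1, θ ^ α * (1 - θ) ^ (-γ))
    ∧ Tendsto
        (fun u : ℝ => (t * s) ^ H * ((s / t) * (φ u / u)) ^ ((1 - γ) / 2) *
          ∫ θ in Set.Ioo (0 : ℝ) 1, θ ^ α * (1 - θ) ^ (-γ))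
        (nhdsWithin 0 (Set.Ioi 0)) (nhds 0) := by
  refine ⟨fun u ⟨hu0, hu1⟩ => ?_, ?_⟩
  · have hφu : φ u ≤ u := by
      rw [hφ u]
      exact mul_le_of_le_one_right hu0.le (exp_neg_log_inv_rpow_lt_one hu0 hu1).le
    exact one_div_rpow_mul_setIntegral_le hα0.le hγ1 hH hs hst.le
      (by rw [hφ u]; positivity) hφu
  · have hp : 0 < (1 - γ) / 2 := by linarith
    have hcont : Continuous fun x : ℝ => (t * s) ^ H * ((s / t) * x) ^ ((1 - γ) / 2) *
        ∫ θ in Ioo (0:ℝ) 1, θ ^ α * (1 - θ) ^ (-γ) :=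
      ((continuous_const.mul continuous_id).rpow_const fun _ => Or.inr hp.le).const_mul _
        |>.mul continuous_const
    have hlim := (hcont.tendsto 0).comp (tendsto_exp_neg_log_inv_rpow_nhdsGT_zero hr)
    rw [mul_zero, zero_rpow hp.ne', mul_zero, zero_mul] at hlim
    refine hlim.congr' ?_
    filter_upwards [self_mem_nhdsWithin] with u (hu : 0 < u)
    rw [Function.comp_apply, hφ u, mul_div_cancel_left₀ _ hu.ne']

theorem gfbm_stmt15 (α γ H s t r : ℝ) (hγ0 : 0 ≤ γ) (hγ1 : γ < 1)
    (hα0 : 0 < α) (hα1 : α < (1 + γ) / 2) (hH : H = α - γ / 2 + 1 / 2)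
    (hs : 0 < s) (hst : s < t) (hr : 0 < r)
    (φ : ℝ → ℝ) (hφ : ∀ u : ℝ, φ u = u * Real.exp (-(Real.log u⁻¹) ^ r)) :
    (∀ u ∈ Set.Ioo (0 : ℝ) 1,
      (1 / (u ^ H * (φ u) ^ H)) *
          (∫ v in Set.Ioo 0 (φ u * s), (u * t - v) ^ α * (φ u * s - v) ^ α * v ^ (-γ))
        ≤ (t * s) ^ H * ((s / t) * (φ u / u)) ^ ((1 - γ) / 2) *
            ∫ θ in Set.Ioo (0 : ℝ) 1, θ ^ α * (1 - θ) ^ (-γ))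
    ∧ Tendsto
        (fun u : ℝ => (t * s) ^ H * ((s / t) * (φ u / u)) ^ ((1 - γ) / 2) *
          ∫ θ in Set.Ioo (0 : ℝ) 1, θ ^ α * (1 - θ) ^ (-γ))
        (nhdsWithin 0 (Set.Ioi 0)) (nhds 0) :=
  gfbm_stmt15_general α γ H s t r hγ1 hα0 hH hs hst hr φ hφ
end
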